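/- arXiv:2409.06636 — 3 statements merged into one kernel-verified Lean document; each statement's English description precedes it below -/
import Mathlib

section
/- Let d ≥ 2 and 0 ≤ p ≤ 1, let E(ρ) = (1−p)·ρ + (p/d)·Tr(ρ)·1 be the d-dimensional depolarizing channel, set a = d²/(d² + p − d²p), and define M(ρ) = (d·Tr(ρ)·1 − ρ)/(d² − 1). Then (i) M is a quantum channel, i.e., there exists a finite family of Kraus operators K_i with ∑ K_i† K_i = 1 and M(ρ) = ∑ K_i ρ K_i† for all ρ; and (ii) for every d×d unitary U and every d×d matrix ρ, UρU† = a·E(UρU†) − (a−1)·M(UρU†). (This exhibits a feasible decomposition proving the upper bound R⁺_depol(U) ≤ (d²−1)p/(d² + p − d²p) of Theorem 2 for d-dimensional depolarizing noise.) -/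
open Matrix

/-- A quantum channel (CPTP map) on `d×d` complex matrices: a map admitting a finite
family of Kraus operators `K i` with `∑ Kᴴ K = 1`. -/
def IsQuantumChannel {d : ℕ} (F : Matrix (Fin d) (Fin d) ℂ → Matrix (Fin d) (Fin d) ℂ) : Prop :=
  ∃ (k : ℕ) (K : Fin k → Matrix (Fin d) (Fin d) ℂ),
    (∑ i, (K i)ᴴ * K i) = 1 ∧ ∀ ρ, F ρ = ∑ i, K i * ρ * (K i)ᴴ

/-!
Write `Eᵢⱼ` for the matrix units and `Dᵢⱼ = Eᵢᵢ - Eⱼⱼ`. Summing `Eᵢⱼ ρ Eⱼᵢ` over `i ≠ j` gives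
`Tr ρ • 1 - diag ρ`, and summing `Dᵢⱼ ρ Dᵢⱼ` over all `i, j` gives `2 (d • diag ρ - ρ)`, so
`M ρ = d/(d²-1) ∑_{i≠j} Eᵢⱼ ρ Eⱼᵢ + 1/(2(d²-1)) ∑ Dᵢⱼ ρ Dᵢⱼ` is in Kraus form; the
normalisation `∑ Kᴴ K = 1` of the rescaled operators follows from `M` being trace preserving.
The decomposition of the unitary channel is a scalar identity valid for every matrix, whose
denominators are nonzero because `d² + p - d²p ≥ 1` for `p ≤ 1`.
-/

open Finset

theorem sum_conjTranspose_mul_eq_one_of_trace {ι n R : Type*} [Fintype ι] [Fintype n]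
    [DecidableEq n] [CommRing R] [StarRing R] (K : ι → Matrix n n R)
    (htr : ∀ ρ, (∑ i, K i * ρ * (K i)ᴴ).trace = ρ.trace) :
    ∑ i, (K i)ᴴ * K i = 1 := by
  refine ext_iff_trace_mul_right.2 fun ρ => ?_
  rw [one_mul, ← htr ρ, sum_mul, trace_sum, trace_sum]
  refine sum_congr rfl fun i _ => ?_
  rw [mul_assoc, trace_mul_comm, mul_assoc]

section Kraus

variable {d : ℕ} {ι : Type*} [Fintype ι] {F : Matrix (Fin d) (Fin d) ℂ → Matrix (Fin d) (Fin d) ℂ}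

theorem isQuantumChannel_of_kraus (K : ι → Matrix (Fin d) (Fin d) ℂ)
    (hK : ∑ i, (K i)ᴴ * K i = 1) (hF : ∀ ρ, F ρ = ∑ i, K i * ρ * (K i)ᴴ) :
    IsQuantumChannel F := by
  let e := Fintype.equivFin ι
  refine ⟨Fintype.card ι, K ∘ e.symm, ?_, fun ρ => ?_⟩
  · rw [← hK]
    exact e.symm.sum_comp fun i => (K i)ᴴ * K i
  · rw [hF]
    exact (e.symm.sum_comp fun i => K i * ρ * (K i)ᴴ).symm

theorem isQuantumChannel_of_weighted_kraus (w : ι → ℝ) (hw : ∀ i, 0 ≤ w i)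
    (A : ι → Matrix (Fin d) (Fin d) ℂ) (hF : ∀ ρ, F ρ = ∑ i, (w i : ℂ) • (A i * ρ * (A i)ᴴ))
    (htr : ∀ ρ, (F ρ).trace = ρ.trace) : IsQuantumChannel F := by
  let K i := (√(w i) : ℂ) • A i
  have hKF ρ : F ρ = ∑ i, K i * ρ * (K i)ᴴ := by
    rw [hF]
    refine sum_congr rfl fun i _ => ?_
    simp only [K, conjTranspose_smul, Complex.star_def, Complex.conj_ofReal, Matrix.smul_mul,
      Matrix.mul_smul, smul_smul, ← Complex.ofReal_mul, Real.mul_self_sqrt (hw i)]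
  exact isQuantumChannel_of_kraus K
    (sum_conjTranspose_mul_eq_one_of_trace K fun ρ => hKF ρ ▸ htr ρ) hKF

end Kraus

section MatrixUnits

variable {n R : Type*} [Fintype n] [DecidableEq n] [CommRing R] [StarRing R] (ρ : Matrix n n R)

theorem sum_offDiag_single_mul_mul_conjTranspose :
    ∑ q ∈ univ.offDiag, single q.1 q.2 (1 : R) * ρ * (single q.1 q.2 1)ᴴ =
      ρ.trace • 1 - diagonal ρ.diag := by
  have hrow (i : n) : ∑ j, single i i (ρ j j) = single i i ρ.trace :=
    (map_sum (singleAddMonoidHom (α := R) i i) _ _).symm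
  have hsplit := sum_union (f := fun q : n × n => single q.1 q.1 (ρ q.2 q.2))
    (disjoint_diag_offDiag (s := univ))
  rw [diag_union_offDiag, sum_diag, sum_product] at hsplit
  simp only [hrow, sum_single_eq_diagonal] at hsplit
  simp only [conjTranspose_single, star_one, single_mul_mul_single, one_mul, mul_one]
  rw [smul_one_eq_diagonal, hsplit]
  exact (add_sub_cancel_left _ _).symm

theorem sum_single_sub_single_mul_mul_conjTranspose :
    ∑ q : n × n, (single q.1 q.1 (1 : R) - single q.2 q.2 1) * ρ *
        (single q.1 q.1 1 - single q.2 q.2 1)ᴴ =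
      2 • (Fintype.card n • diagonal ρ.diag - ρ) := by
  simp only [conjTranspose_sub, conjTranspose_single, star_one, sub_mul, mul_sub,
    single_mul_mul_single, one_mul, mul_one]
  rw [Fintype.sum_prod_type]
  simp only [sum_sub_distrib, sum_const, card_univ, ← smul_sum, sum_single_eq_diagonal]
  rw [sum_comm (f := fun i j => single j i (ρ j i)), ← matrix_eq_sum_single]
  simp only [← diag_apply]
  abel

end MatrixUnits

theorem isQuantumChannel_inv_smul_trace_smul_one_sub {d : ℕ} (hd : 2 ≤ d) :
    IsQuantumChannel fun ρ : Matrix (Fin d) (Fin d) ℂ =>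
      (((d : ℝ) ^ 2 - 1 : ℝ) : ℂ)⁻¹ •
        (((d : ℂ) * ρ.trace) • (1 : Matrix (Fin d) (Fin d) ℂ) - ρ) := by
  have hc : (0 : ℝ) < (d : ℝ) ^ 2 - 1 := by
    have : (2 : ℝ) ≤ d := by exact_mod_cast hd
    nlinarith
  have hc' : ((d : ℂ) ^ 2 - 1) ≠ 0 := by exact_mod_cast hc.ne'
  refine isQuantumChannel_of_weighted_kraus
    (ι := (univ : Finset (Fin d)).offDiag ⊕ (Fin d × Fin d))
    (Sum.elim (fun _ => d / ((d : ℝ) ^ 2 - 1)) fun _ => (2 * ((d : ℝ) ^ 2 - 1))⁻¹)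
    (by rintro (_ | _) <;> dsimp only [Sum.elim_inl, Sum.elim_inr] <;> positivity)
    (Sum.elim (fun q => single q.val.1 q.val.2 1)
      fun q : Fin d × Fin d => single q.1 q.1 1 - single q.2 q.2 1)
    (fun ρ => ?_) (fun ρ => ?_)
  · rw [Fintype.sum_sum_type]
    simp only [Sum.elim_inl, Sum.elim_inr, ← smul_sum]
    rw [sum_coe_sort univ.offDiag (fun q => single q.1 q.2 (1 : ℂ) * ρ * (single q.1 q.2 1)ᴴ),
      sum_offDiag_single_mul_mul_conjTranspose, sum_single_sub_single_mul_mul_conjTranspose,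
      Fintype.card_fin]
    push_cast
    match_scalars <;> field_simp
    ring
  · simp only [trace_smul, trace_sub, trace_one, Fintype.card_fin, smul_eq_mul]
    push_cast
    field_simp

theorem d_dim_depolarizing_feasible_decomposition_general (d : ℕ) (hd : 2 ≤ d)
    (p : ℝ) (hp1 : p ≤ 1)
    (E : Matrix (Fin d) (Fin d) ℂ → Matrix (Fin d) (Fin d) ℂ)
    (hE : ∀ ρ, E ρ = ((1 - p : ℝ) : ℂ) • ρ + (((p / d : ℝ) : ℂ) * ρ.trace) • (1 : Matrix (Fin d) (Fin d) ℂ))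
    (a : ℝ) (ha : a = (d : ℝ) ^ 2 / ((d : ℝ) ^ 2 + p - (d : ℝ) ^ 2 * p))
    (M : Matrix (Fin d) (Fin d) ℂ → Matrix (Fin d) (Fin d) ℂ)
    (hM : ∀ ρ, M ρ = (((d : ℝ) ^ 2 - 1 : ℝ) : ℂ)⁻¹ •
        (((d : ℂ) * ρ.trace) • (1 : Matrix (Fin d) (Fin d) ℂ) - ρ)) :
    IsQuantumChannel M ∧
    ∀ U : Matrix (Fin d) (Fin d) ℂ, U ∈ Matrix.unitaryGroup (Fin d) ℂ →
      ∀ ρ : Matrix (Fin d) (Fin d) ℂ,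
        U * ρ * Uᴴ = (a : ℂ) • E (U * ρ * Uᴴ) - ((a : ℂ) - 1) • M (U * ρ * Uᴴ) := by
  refine ⟨funext hM ▸ isQuantumChannel_inv_smul_trace_smul_one_sub hd, fun U _ ρ => ?_⟩
  have hd' : (2 : ℝ) ≤ d := by exact_mod_cast hd
  have hd0 : (d : ℂ) ≠ 0 := by exact_mod_cast (by omega : d ≠ 0)
  have hc : (d : ℂ) ^ 2 - 1 ≠ 0 := by exact_mod_cast (by nlinarith : (d : ℝ) ^ 2 - 1 ≠ 0)
  have hden : (d : ℂ) ^ 2 + p - d ^ 2 * p ≠ 0 := by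
    -- `d² + p - d²p = 1 + (1 - p)(d² - 1)`
    have := mul_nonneg (sub_nonneg.2 hp1) (by nlinarith : (0 : ℝ) ≤ d ^ 2 - 1)
    exact_mod_cast (by nlinarith : (d : ℝ) ^ 2 + p - d ^ 2 * p ≠ 0)
  rw [hE, hM, ha]
  push_cast
  match_scalars <;> field_simp <;> ring

/-- Theorem 2 (feasible decomposition for `d`-dimensional depolarizing noise): with
`E(ρ) = (1−p)ρ + (p/d)·Tr(ρ)·1`, `a = d²/(d²+p−d²p)` and
`M(ρ) = (d·Tr(ρ)·1 − ρ)/(d²−1)`, the map `M` is a quantum channel and every unitary `U`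
satisfies `UρU† = a·E(UρU†) − (a−1)·M(UρU†)`; hence
`R⁺_depol(U) ≤ (d²−1)p/(d²+p−d²p)`. -/
theorem d_dim_depolarizing_feasible_decomposition (d : ℕ) (hd : 2 ≤ d)
    (p : ℝ) (hp0 : 0 ≤ p) (hp1 : p ≤ 1)
    (E : Matrix (Fin d) (Fin d) ℂ → Matrix (Fin d) (Fin d) ℂ)
    (hE : ∀ ρ, E ρ = ((1 - p : ℝ) : ℂ) • ρ + (((p / d : ℝ) : ℂ) * ρ.trace) • (1 : Matrix (Fin d) (Fin d) ℂ))
    (a : ℝ) (ha : a = (d : ℝ) ^ 2 / ((d : ℝ) ^ 2 + p - (d : ℝ) ^ 2 * p))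
    (M : Matrix (Fin d) (Fin d) ℂ → Matrix (Fin d) (Fin d) ℂ)
    (hM : ∀ ρ, M ρ = (((d : ℝ) ^ 2 - 1 : ℝ) : ℂ)⁻¹ •
        (((d : ℂ) * ρ.trace) • (1 : Matrix (Fin d) (Fin d) ℂ) - ρ)) :
    IsQuantumChannel M ∧
    ∀ U : Matrix (Fin d) (Fin d) ℂ, U ∈ Matrix.unitaryGroup (Fin d) ℂ →
      ∀ ρ : Matrix (Fin d) (Fin d) ℂ,
        U * ρ * Uᴴ = (a : ℂ) • E (U * ρ * Uᴴ) - ((a : ℂ) - 1) • M (U * ρ * Uᴴ) :=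
  d_dim_depolarizing_feasible_decomposition_general d hd p hp1 E hE a ha M hM
end

section
/- Let d ≥ 2 and 0 ≤ p ≤ 1, let E(ρ) = (1−p)·ρ + (p/d)·Tr(ρ)·1 be the d-dimensional depolarizing channel, and let U be a d×d unitary matrix. Then for every real s ≥ 1 and every pair of quantum channels W, M on d×d complex matrices satisfying UρU† = s·E(W(ρ)) − (s−1)·M(ρ) for all ρ, one has s − 1 ≥ (d²−1)p/(d² + p − d²p). (This is the lower bound of Theorem 2 for d-dimensional depolarizing noise; together with the matching feasible decomposition it gives R⁺_depol(U) = (d²−1)p/(d² + p − d²p).) -/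
open Matrix

/-! The functional `F_U(Φ) = ∑ᵢⱼ (Uᴴ Φ(Eᵢⱼ) U)ᵢⱼ` is linear in `Φ` and equals `d²` on the unitary
channel `ρ ↦ UρUᴴ`. On a channel with Kraus operators `Kₖ` it is `∑ₖ |tr (Uᴴ Kₖ)|²`, which lies in
`[0, d²]` by Cauchy–Schwarz, and since `W` preserves the trace, `F_U(E ∘ W) = (1 - p) F_U(W) + p`.
Applying `F_U` to the decomposition therefore gives `d² ≤ s ((1 - p) d² + p)`, which rearranges to
the bound. -/

namespace Matrix

theorem mul_single_mul_apply {l m n o α : Type*} [Fintype m] [Fintype n] [DecidableEq m]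
    [DecidableEq n] [Semiring α] (A : Matrix l m α) (B : Matrix n o α) (i : m) (j : n) (c : α)
    (a : l) (b : o) : (A * single i j c * B) a b = A a i * c * B j b := by
  rw [mul_apply, Finset.sum_eq_single j]
  · rw [mul_single_apply_same]
  · intro k _ hkj
    rw [mul_single_apply_of_ne _ _ _ _ _ hkj, zero_mul]
  · simp

variable {n : Type*} [Fintype n] [DecidableEq n]

open scoped ComplexOrder in
theorem normSq_trace_conjTranspose_mul_le (A B : Matrix n n ℂ) :
    Complex.normSq (trace (Aᴴ * B)) ≤ (trace (Aᴴ * A)).re * (trace (Bᴴ * B)).re := by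
  let _ := (1 : Matrix n n ℂ).toMatrixSeminormedAddCommGroup PosSemidef.one
  let _ := (1 : Matrix n n ℂ).toMatrixInnerProductSpace PosSemidef.one
  have inner_eq (X Y : Matrix n n ℂ) : inner ℂ X Y = trace (Y * Xᴴ) := by
    show trace (Y * 1 * Xᴴ) = _
    rw [mul_one]
  have h := inner_mul_inner_self_le (𝕜 := ℂ) Aᴴ Bᴴ
  have trace_swap : trace (Bᴴ * A) = star (trace (Aᴴ * B)) := by
    rw [← trace_conjTranspose, conjTranspose_mul, conjTranspose_conjTranspose]
  simp only [inner_eq, conjTranspose_conjTranspose, trace_swap, norm_star] at h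
  rwa [← sq, Complex.sq_norm] at h

theorem sum_normSq_trace_conjTranspose_mul_le {ι : Type*} [Fintype ι] {U : Matrix n n ℂ}
    (hU : U ∈ unitaryGroup n ℂ) {K : ι → Matrix n n ℂ} (hK : ∑ κ, (K κ)ᴴ * K κ = 1) :
    ∑ κ, Complex.normSq (trace (Uᴴ * K κ)) ≤ (Fintype.card n : ℝ) ^ 2 := by
  have hUU : Uᴴ * U = 1 := hU.1
  calc ∑ κ, Complex.normSq (trace (Uᴴ * K κ))
      ≤ ∑ κ, (trace (Uᴴ * U)).re * (trace ((K κ)ᴴ * K κ)).re :=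
        Finset.sum_le_sum fun κ _ => normSq_trace_conjTranspose_mul_le U (K κ)
    _ = (Fintype.card n : ℝ) ^ 2 := by
        rw [← Finset.mul_sum, ← Complex.re_sum, ← trace_sum, hK, hUU, trace_one]
        simp [sq]

/-- `entanglementOverlap U Φ = ⟨ψ_U| (Φ ⊗ id)(|Ω⟩⟨Ω|) |ψ_U⟩` for `Ω = ∑ᵢ |ii⟩` and
`ψ_U = (U ⊗ 1) Ω`: `(card n)²` times the entanglement fidelity of `Φ` with the unitary `U`. -/
def entanglementOverlap (U : Matrix n n ℂ) : (Matrix n n ℂ → Matrix n n ℂ) →ₗ[ℂ] ℂ where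
  toFun Φ := ∑ i, ∑ j, (Uᴴ * Φ (single i j 1) * U) i j
  map_add' Φ Ψ := by simp [Matrix.mul_add, Matrix.add_mul, Finset.sum_add_distrib]
  map_smul' c Φ := by simp [Finset.mul_sum]

theorem entanglementOverlap_apply (U : Matrix n n ℂ) (Φ : Matrix n n ℂ → Matrix n n ℂ) :
    entanglementOverlap U Φ = ∑ i, ∑ j, (Uᴴ * Φ (single i j 1) * U) i j :=
  rfl

theorem entanglementOverlap_conj (U K : Matrix n n ℂ) :
    entanglementOverlap U (fun ρ => K * ρ * Kᴴ) = Complex.normSq (trace (Uᴴ * K)) := by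
  have entry (i j : n) : (Uᴴ * (K * single i j 1 * Kᴴ) * U : Matrix n n ℂ) i j =
      (Uᴴ * K) i i * starRingEnd ℂ ((Uᴴ * K) j j) := by
    rw [show Uᴴ * (K * single i j 1 * Kᴴ) * U = Uᴴ * K * single i j 1 * (Uᴴ * K)ᴴ by
        simp only [conjTranspose_mul, conjTranspose_conjTranspose, Matrix.mul_assoc],
      mul_single_mul_apply, mul_one, conjTranspose_apply, starRingEnd_apply]
  rw [entanglementOverlap_apply, ← Complex.mul_conj, trace, map_sum, Finset.sum_mul_sum]
  simp only [entry]
  rfl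

theorem entanglementOverlap_kraus {ι : Type*} [Fintype ι] (U : Matrix n n ℂ)
    (K : ι → Matrix n n ℂ) :
    entanglementOverlap U (fun ρ => ∑ κ, K κ * ρ * (K κ)ᴴ) =
      ((∑ κ, Complex.normSq (trace (Uᴴ * K κ)) : ℝ) : ℂ) := by
  have sum_fun : (fun ρ => ∑ κ, K κ * ρ * (K κ)ᴴ) = ∑ κ, fun ρ => K κ * ρ * (K κ)ᴴ :=
    (Finset.sum_fn _ _).symm
  rw [sum_fun, map_sum]
  push_cast
  simp only [entanglementOverlap_conj]

theorem entanglementOverlap_conj_unitary {U : Matrix n n ℂ} (hU : U ∈ unitaryGroup n ℂ) :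
    entanglementOverlap U (fun ρ => U * ρ * Uᴴ) = (Fintype.card n : ℂ) ^ 2 := by
  rw [entanglementOverlap_conj, show Uᴴ * U = 1 from hU.1, trace_one, Complex.normSq_natCast]
  push_cast
  ring

theorem entanglementOverlap_smul_one {U : Matrix n n ℂ} (hU : U ∈ unitaryGroup n ℂ)
    (f : Matrix n n ℂ → ℂ) :
    entanglementOverlap U (fun ρ => f ρ • 1) = ∑ i, f (single i i 1) := by
  have hUU : Uᴴ * U = 1 := hU.1
  simp [entanglementOverlap_apply, hUU, one_apply]

theorem entanglementOverlap_smul_add_trace_smul_one {U : Matrix n n ℂ}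
    (hU : U ∈ unitaryGroup n ℂ) (a b : ℂ) {Φ : Matrix n n ℂ → Matrix n n ℂ}
    (hΦ : ∀ ρ, trace (Φ ρ) = trace ρ) :
    entanglementOverlap U (fun ρ => a • Φ ρ + (b * trace (Φ ρ)) • 1) =
      a * entanglementOverlap U Φ + b * Fintype.card n := by
  rw [show (fun ρ => a • Φ ρ + (b * trace (Φ ρ)) • (1 : Matrix n n ℂ)) =
      a • Φ + fun ρ => (b * trace (Φ ρ)) • 1 from rfl, map_add, map_smul,
    entanglementOverlap_smul_one hU]
  simp [hΦ, mul_comm]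

end Matrix

theorem IsQuantumChannel.trace_apply {d : ℕ}
    {Φ : Matrix (Fin d) (Fin d) ℂ → Matrix (Fin d) (Fin d) ℂ} (hΦ : IsQuantumChannel Φ) (ρ : Matrix (Fin d) (Fin d) ℂ) : trace (Φ ρ) = trace ρ := by
  obtain ⟨k, K, hK, hΦ⟩ := hΦ
  simp_rw [hΦ, trace_sum, trace_mul_cycle (K _), ← trace_sum, ← Finset.sum_mul, hK, one_mul]

theorem IsQuantumChannel.exists_entanglementOverlap_eq {d : ℕ}
    {Φ : Matrix (Fin d) (Fin d) ℂ → Matrix (Fin d) (Fin d) ℂ} (hΦ : IsQuantumChannel Φ)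
    {U : Matrix (Fin d) (Fin d) ℂ} (hU : U ∈ unitaryGroup (Fin d) ℂ) :
    ∃ r : ℝ, 0 ≤ r ∧ r ≤ (d : ℝ) ^ 2 ∧ entanglementOverlap U Φ = r := by
  obtain ⟨k, K, hK, hΦ⟩ := hΦ
  obtain rfl : Φ = fun ρ => ∑ κ, K κ * ρ * (K κ)ᴴ := funext hΦ
  refine ⟨_, Finset.sum_nonneg fun _ _ => Complex.normSq_nonneg _, ?_,
    entanglementOverlap_kraus U K⟩
  simpa using sum_normSq_trace_conjTranspose_mul_le hU hK

theorem d_dim_depolarizing_robustness_lower_bound_general (d : ℕ) (hd : 2 ≤ d)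
    (p : ℝ) (hp1 : p ≤ 1)
    (E : Matrix (Fin d) (Fin d) ℂ → Matrix (Fin d) (Fin d) ℂ)
    (hE : ∀ ρ, E ρ = ((1 - p : ℝ) : ℂ) • ρ + (((p / d : ℝ) : ℂ) * ρ.trace) • (1 : Matrix (Fin d) (Fin d) ℂ))
    (U : Matrix (Fin d) (Fin d) ℂ) (hU : U ∈ Matrix.unitaryGroup (Fin d) ℂ)
    (s : ℝ) (hs : 1 ≤ s)
    (W M : Matrix (Fin d) (Fin d) ℂ → Matrix (Fin d) (Fin d) ℂ)
    (hW : IsQuantumChannel W) (hM : IsQuantumChannel M)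
    (hdecomp : ∀ ρ, U * ρ * Uᴴ = (s : ℂ) • E (W ρ) - ((s : ℂ) - 1) • M ρ) :
    s - 1 ≥ ((d : ℝ) ^ 2 - 1) * p / ((d : ℝ) ^ 2 + p - (d : ℝ) ^ 2 * p) := by
  obtain ⟨rW, -, hrW, hoW⟩ := hW.exists_entanglementOverlap_eq hU
  obtain ⟨rM, hrM, -, hoM⟩ := hM.exists_entanglementOverlap_eq hU
  have hoEW : entanglementOverlap U (E ∘ W) = (1 - p) * rW + p := by
    have hd0 : (d : ℂ) ≠ 0 := Nat.cast_ne_zero.2 (by omega)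
    simp only [Function.comp_def, hE]
    rw [entanglementOverlap_smul_add_trace_smul_one hU _ _ hW.trace_apply, hoW,
      Fintype.card_fin]
    push_cast
    field_simp
  have hbalance : (d : ℝ) ^ 2 = s * ((1 - p) * rW + p) - (s - 1) * rM := by
    have h := congrArg (entanglementOverlap U) (funext hdecomp :
      (fun ρ => U * ρ * Uᴴ) = (s : ℂ) • (E ∘ W) - ((s : ℂ) - 1) • M)
    rw [entanglementOverlap_conj_unitary hU, Fintype.card_fin, map_sub, map_smul, map_smul, hoEW,
      hoM, smul_eq_mul, smul_eq_mul] at h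
    exact_mod_cast h
  have hd1 : 1 ≤ (d : ℝ) ^ 2 := one_le_pow₀ (Nat.one_le_cast.2 (by omega))
  have hden : 0 < (d : ℝ) ^ 2 + p - (d : ℝ) ^ 2 * p := by
    nlinarith [mul_nonneg (sub_nonneg.2 hp1) (sub_nonneg.2 hd1)]
  rw [ge_iff_le, div_le_iff₀ hden]
  nlinarith [mul_nonneg (sub_nonneg.2 hs) hrM,
    mul_nonneg (mul_nonneg (zero_le_one.trans hs) (sub_nonneg.2 hp1)) (sub_nonneg.2 hrW)]

/-- Theorem 2 (lower bound for `d`-dimensional depolarizing noise): with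
`E(ρ) = (1−p)ρ + (p/d)·Tr(ρ)·1`, for every `s ≥ 1` and quantum channels `W, M`
satisfying `UρU† = s·E(W(ρ)) − (s−1)·M(ρ)`, one has
`s − 1 ≥ (d²−1)p/(d²+p−d²p)`. -/
theorem d_dim_depolarizing_robustness_lower_bound (d : ℕ) (hd : 2 ≤ d)
    (p : ℝ) (hp0 : 0 ≤ p) (hp1 : p ≤ 1)
    (E : Matrix (Fin d) (Fin d) ℂ → Matrix (Fin d) (Fin d) ℂ)
    (hE : ∀ ρ, E ρ = ((1 - p : ℝ) : ℂ) • ρ + (((p / d : ℝ) : ℂ) * ρ.trace) • (1 : Matrix (Fin d) (Fin d) ℂ))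
    (U : Matrix (Fin d) (Fin d) ℂ) (hU : U ∈ Matrix.unitaryGroup (Fin d) ℂ)
    (s : ℝ) (hs : 1 ≤ s)
    (W M : Matrix (Fin d) (Fin d) ℂ → Matrix (Fin d) (Fin d) ℂ)
    (hW : IsQuantumChannel W) (hM : IsQuantumChannel M)
    (hdecomp : ∀ ρ, U * ρ * Uᴴ = (s : ℂ) • E (W ρ) - ((s : ℂ) - 1) • M ρ) :
    s - 1 ≥ ((d : ℝ) ^ 2 - 1) * p / ((d : ℝ) ^ 2 + p - (d : ℝ) ^ 2 * p) :=
  d_dim_depolarizing_robustness_lower_bound_general d hd p hp1 E hE U hU s hs W M hW hM hdecomp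
end

section
/- Let 0 ≤ p ≤ 1, let Z = [[1,0],[0,−1]], and let E^deph(σ) = (1 − p/2)·σ + (p/2)·ZσZ be the single-qubit partially dephasing channel. Then for every 2×2 unitary U and every 2×2 complex matrix ρ, UρU† = (2/(2−p))·E^deph(UρU†) − (p/(2−p))·Z(UρU†)Z, and the map ρ ↦ Z(UρU†)Z is a quantum channel. (This exhibits a feasible decomposition proving the upper-bound direction R⁺_deph(U) ≤ p/(2−p) of Theorem 4.) -/
open Matrix

/-- The Pauli Z matrix. -/
def PauliZ : Matrix (Fin 2) (Fin 2) ℂ := !![1, 0; 0, -1]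

lemma PauliZ_conjTranspose : PauliZᴴ = PauliZ := by
  simp [PauliZ]
  ext i j
  fin_cases i <;> fin_cases j <;> simp [conjTranspose_apply]

lemma PauliZ_sq : PauliZ * PauliZ = 1 := by
  simp [PauliZ]
  ext i j
  fin_cases i <;> fin_cases j <;> norm_num [Matrix.mul_fin_two, Matrix.one_fin_two]

/-- Theorem 4 (upper-bound direction): for the single-qubit partially dephasing channel
`E^deph(σ) = (1 − p/2)·σ + (p/2)·ZσZ`, every `2×2` unitary `U` satisfies
`UρU† = (2/(2−p))·E^deph(UρU†) − (p/(2−p))·Z(UρU†)Z`, and `ρ ↦ Z(UρU†)Z` is a quantum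
channel; hence `R⁺_deph(U) ≤ p/(2−p)`. -/
theorem dephasing_robustness_upper_bound
    (p : ℝ) (hp0 : 0 ≤ p) (hp1 : p ≤ 1)
    (E : Matrix (Fin 2) (Fin 2) ℂ → Matrix (Fin 2) (Fin 2) ℂ)
    (hE : ∀ σ, E σ = ((1 - p / 2 : ℝ) : ℂ) • σ + ((p / 2 : ℝ) : ℂ) • (PauliZ * σ * PauliZ))
    (U : Matrix (Fin 2) (Fin 2) ℂ) (hU : U ∈ Matrix.unitaryGroup (Fin 2) ℂ) :
    (∀ ρ : Matrix (Fin 2) (Fin 2) ℂ,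
      U * ρ * Uᴴ = ((2 / (2 - p) : ℝ) : ℂ) • E (U * ρ * Uᴴ)
        - ((p / (2 - p) : ℝ) : ℂ) • (PauliZ * (U * ρ * Uᴴ) * PauliZ)) ∧
    IsQuantumChannel (fun ρ => PauliZ * (U * ρ * Uᴴ) * PauliZ) := by
  have h2p : (2 - p : ℝ) ≠ 0 := by linarith
  constructor
  · intro ρ
    rw [hE]
    set σ := U * ρ * Uᴴ
    rw [smul_add, smul_smul, smul_smul, add_sub_assoc, ← sub_smul]
    have h1 : ((2 / (2 - p) : ℝ) : ℂ) * ((1 - p / 2 : ℝ) : ℂ) = 1 := by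
      have : (2 / (2 - p)) * (1 - p / 2) = 1 := by field_simp
      rw [← Complex.ofReal_mul, this, Complex.ofReal_one]
    have h2 : ((2 / (2 - p) : ℝ) : ℂ) * ((p / 2 : ℝ) : ℂ) - ((p / (2 - p) : ℝ) : ℂ) = 0 := by
      have : (2 / (2 - p)) * (p / 2) - p / (2 - p) = 0 := by field_simp; ring
      rw [← Complex.ofReal_mul, ← Complex.ofReal_sub, this, Complex.ofReal_zero]
    rw [h1, h2, one_smul, zero_smul, add_zero]
  · refine ⟨1, fun _ => PauliZ * U, ?_, ?_⟩
    · rw [Fin.sum_univ_one, conjTranspose_mul, PauliZ_conjTranspose,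
        mul_assoc, ← mul_assoc PauliZ, PauliZ_sq, one_mul]
      exact mem_unitaryGroup_iff'.mp hU
    · intro ρ
      rw [Fin.sum_univ_one, conjTranspose_mul, PauliZ_conjTranspose]
      simp only [Matrix.mul_assoc]
end
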